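/- arXiv:1303.4540 — 6 statements merged into one kernel-verified Lean document; each statement's English description precedes it below -/
import Mathlib

section
/- For integers 0 ≤ i, j with i + j ≤ n, and 0 < θ ≤ 1, the quantity ψ_n(m) := ∏_{k=m+1}^{n} (1 + (θ-1)/k)^{-1} satisfies ψ_n(n-i-j) ≥ ψ_n(n-i) · ψ_n(n-j). -/
open Finset

/-- `ψ_n(m) = ∏_{k=m+1}^{n} (1 + (θ-1)/k)^{-1}`. -/
noncomputable def psiProd (θ : ℝ) (n m : ℕ) : ℝ :=
  ∏ k ∈ Finset.Ioc m n, (1 + (θ - 1) / (k : ℝ))⁻¹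

/-! `ψ_n(m)` is the product of the factors `(1 + (θ-1)/k)⁻¹` over the window `(m, n]`. For
`0 < θ ≤ 1` these factors are positive and decrease in `k`, so sliding a window of fixed length
to the right can only decrease the product. Splitting `(n-i-j, n]` at `n-i`, the right piece is
`ψ_n(n-i)` and the left piece is the window `(n-j, n]` slid `i` places to the left. -/

section WindowProducts

variable {R : Type*} [CommSemiring R] [PartialOrder R] [IsOrderedRing R] {f : ℕ → R}

theorem prod_Ioc_add_le_prod_Ioc (hf0 : ∀ k, 1 ≤ k → 0 ≤ f k) (hf : AntitoneOn f (Set.Ici 1))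
    (a b i : ℕ) : ∏ k ∈ Ioc (a + i) (b + i), f k ≤ ∏ k ∈ Ioc a b, f k := by
  rw [← map_add_right_Ioc, prod_map]
  refine prod_le_prod (fun k hk => ?_) fun k hk => ?_ <;>
    have hk1 : 1 ≤ k := (Nat.zero_le a).trans_lt (mem_Ioc.1 hk).1
  · exact hf0 _ (hk1.trans (Nat.le_add_right k i))
  · exact hf hk1 (hk1.trans (Nat.le_add_right k i)) (Nat.le_add_right k i)

theorem prod_Ioc_mul_prod_Ioc_le (hf0 : ∀ k, 1 ≤ k → 0 ≤ f k) (hf : AntitoneOn f (Set.Ici 1))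
    {n i j : ℕ} (hij : i + j ≤ n) :
    (∏ k ∈ Ioc (n - i) n, f k) * ∏ k ∈ Ioc (n - j) n, f k ≤ ∏ k ∈ Ioc (n - i - j) n, f k := by
  rw [← prod_Ioc_consecutive f (Nat.sub_le (n - i) j) (Nat.sub_le n i), mul_comm]
  have hslide := prod_Ioc_add_le_prod_Ioc hf0 hf (n - i - j) (n - i) i
  rw [show n - i - j + i = n - j by omega, Nat.sub_add_cancel (by omega : i ≤ n)] at hslide
  exact mul_le_mul_of_nonneg_right hslide <|
    prod_nonneg fun k hk => hf0 k ((Nat.zero_le _).trans_lt (mem_Ioc.1 hk).1)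

end WindowProducts

theorem one_add_sub_one_div_pos {θ : ℝ} (hθ0 : 0 < θ) {k : ℕ} (hk : 1 ≤ k) :
    0 < 1 + (θ - 1) / k := by
  have hk' : (1 : ℝ) ≤ k := by exact_mod_cast hk
  rw [one_add_div (by positivity)]
  exact div_pos (by linarith) (by positivity)

theorem antitoneOn_inv_one_add_sub_one_div {θ : ℝ} (hθ0 : 0 < θ) (hθ1 : θ ≤ 1) :
    AntitoneOn (fun k : ℕ => (1 + (θ - 1) / k)⁻¹) (Set.Ici 1) := by
  intro a ha b _ hab
  have ha' : (0 : ℝ) < a := by exact_mod_cast ha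
  have hdiv : (1 - θ) / b ≤ (1 - θ) / a :=
    div_le_div_of_nonneg_left (sub_nonneg.2 hθ1) ha' (by exact_mod_cast hab)
  refine inv_anti₀ (one_add_sub_one_div_pos hθ0 ha) ?_
  rw [← neg_sub 1 θ, neg_div, neg_div]
  linarith

theorem psiProd_supermult (θ : ℝ) (hθ0 : 0 < θ) (hθ1 : θ ≤ 1) (n i j : ℕ)
    (hij : i + j ≤ n) :
    psiProd θ n (n - i) * psiProd θ n (n - j) ≤ psiProd θ n (n - i - j) :=
  prod_Ioc_mul_prod_Ioc_le (fun _ hk => (inv_pos.2 (one_add_sub_one_div_pos hθ0 hk)).le)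
    (antitoneOn_inv_one_add_sub_one_div hθ0 hθ1) hij
end

section
/- For θ ≥ 1/log 2, the map θ ↦ t_θ(1) := θ ∫_{1/2}^{1} (1-u)^{θ-1}/u du is (weakly) decreasing in θ. -/
/-!
For each fixed `u ∈ (1/2, 1)` the integrand `θ (1 - u)^(θ-1) / u` is already antitone in `θ`
on `[1 / log 2, ∞)`: its `θ`-derivative is `(1 - u)^(θ-1) (1 + θ log (1 - u)) / u`, and
`θ log (1 - u) ≤ -θ log 2 ≤ -1`. Integrating this pointwise inequality gives the theorem.
-/

open Real Set

theorem hasDerivAt_mul_rpow_sub_one {x : ℝ} (hx : 0 < x) (θ : ℝ) :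
    HasDerivAt (fun θ : ℝ => θ * x ^ (θ - 1)) (x ^ (θ - 1) * (1 + θ * log x)) θ := by
  have hpow : HasDerivAt (fun θ : ℝ => x ^ (θ - 1)) (x ^ (θ - 1) * log x) θ := by
    simpa [Function.comp_def] using ((hasStrictDerivAt_const_rpow hx (θ - 1)).hasDerivAt).comp θ
      ((hasDerivAt_id θ).sub_const 1)
  exact ((hasDerivAt_id' θ).mul hpow).congr_deriv (by ring)

theorem antitoneOn_mul_rpow_sub_one {x : ℝ} (hx₀ : 0 < x) (hx₁ : x < 1) :
    AntitoneOn (fun θ : ℝ => θ * x ^ (θ - 1)) (Ici (-(log x)⁻¹)) := by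
  have hlog : log x < 0 := log_neg hx₀ hx₁
  refine antitoneOn_of_hasDerivWithinAt_nonpos (convex_Ici _)
    (fun θ _ => (hasDerivAt_mul_rpow_sub_one hx₀ θ).continuousAt.continuousWithinAt)
    (fun θ _ => (hasDerivAt_mul_rpow_sub_one hx₀ θ).hasDerivWithinAt) fun θ hθ => ?_
  rw [interior_Ici, mem_Ioi] at hθ
  have hθlog : θ * log x < -1 := by
    simpa [inv_mul_cancel₀ hlog.ne] using mul_lt_mul_of_neg_right hθ hlog
  exact mul_nonpos_of_nonneg_of_nonpos (rpow_nonneg hx₀.le _) (by linarith)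

theorem intervalIntegrable_rpow_sub_one_div {θ : ℝ} (hθ : 1 ≤ θ) :
    IntervalIntegrable (fun u : ℝ => (1 - u) ^ (θ - 1) / u) MeasureTheory.volume (1 / 2) 1 := by
  refine ContinuousOn.intervalIntegrable fun u hu => ?_
  rw [uIcc_of_le (by norm_num)] at hu
  refine ContinuousAt.continuousWithinAt (ContinuousAt.div ?_ continuousAt_id (by linarith [hu.1]))
  exact (continuousAt_rpow_const _ _ (Or.inr (by linarith))).comp (by fun_prop)

theorem neg_inv_log_le_inv_log_two {x : ℝ} (hx₀ : 0 < x) (hx : x ≤ 1 / 2) :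
    -(log x)⁻¹ ≤ 1 / log 2 := by
  have hlog : log 2 ≤ -log x := by
    rw [← log_inv, ← one_div]
    exact log_le_log two_pos ((le_div_iff₀ hx₀).2 (by linarith))
  rw [← inv_neg, one_div]
  exact inv_anti₀ (log_pos one_lt_two) hlog

theorem one_le_inv_log_two : 1 ≤ 1 / log 2 := by
  rw [le_div_iff₀ (log_pos one_lt_two), one_mul]
  exact (log_two_lt_d9.trans (by norm_num)).le

theorem t_theta_one_antitoneOn :
    AntitoneOn (fun θ : ℝ => θ * ∫ u in (1/2 : ℝ)..1, (1 - u) ^ (θ - 1) / u)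
      (Set.Ici (1 / Real.log 2)) := by
  intro a ha b hb hab
  simp only [← intervalIntegral.integral_const_mul]
  refine intervalIntegral.integral_mono_on_of_le_Ioo (by norm_num)
    ((intervalIntegrable_rpow_sub_one_div (one_le_inv_log_two.trans hb)).const_mul b)
    ((intervalIntegrable_rpow_sub_one_div (one_le_inv_log_two.trans ha)).const_mul a)
    fun u ⟨hu₁, hu₂⟩ => ?_
  have hthreshold := neg_inv_log_le_inv_log_two (x := 1 - u) (by linarith) (by linarith)
  rw [← mul_div_assoc, ← mul_div_assoc]
  refine div_le_div_of_nonneg_right ?_ (by linarith)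
  exact antitoneOn_mul_rpow_sub_one (by linarith) (by linarith) (hthreshold.trans ha)
    (hthreshold.trans hb) hab
end

section
/- Watterson's formula: Let ν_n be the Ewens measure with parameter θ > 0 on S_n. For (j_1,...,j_r) ∈ Z_+^r with 1 ≤ r ≤ n and l := 1·j_1 + 2·j_2 + ... + r·j_r, the expectation of ∏_{i=1}^r (k_i(σ))_{(j_i)} with respect to ν_n equals 1{l ≤ n} · ψ_n(n-l) · ∏_{i=1}^r (θ/i)^{j_i}, where (x)_{(m)} = x(x-1)···(x-m+1) is the falling factorial and ψ_n(m) = (n!/θ^{(n)}) · (θ^{(m)}/m!). -/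
open Finset

noncomputable section

/-- Rising factorial `θ^{(n)} = θ(θ+1)⋯(θ+n-1)`. -/
def risingFact (θ : ℝ) (n : ℕ) : ℝ := ∏ i ∈ Finset.range n, (θ + i)

/-- `k_j(σ)`: the number of cycles of length `j` in `σ` (fixed points count as 1-cycles). -/
def cycCount {n : ℕ} (σ : Equiv.Perm (Fin n)) (j : ℕ) : ℕ :=
  if j = 1 then n - σ.cycleType.sum else Multiset.count j σ.cycleType

/-- `w(σ)`: the total number of cycles of `σ`, including fixed points. -/
def numCyc {n : ℕ} (σ : Equiv.Perm (Fin n)) : ℕ :=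
  Multiset.card σ.cycleType + (n - σ.cycleType.sum)

/-- Expectation with respect to the Ewens measure `ν_{n,θ}`. -/
def ewensE (θ : ℝ) (n : ℕ) (g : Equiv.Perm (Fin n) → ℝ) : ℝ :=
  (∑ σ : Equiv.Perm (Fin n), θ ^ numCyc σ * g σ) / risingFact θ n

/-- Falling factorial `x(x-1)⋯(x-k+1)` of a real number. -/
def fallFact (x : ℝ) (k : ℕ) : ℝ := ∏ i ∈ Finset.range k, (x - i)

end

noncomputable def psiRF (θ : ℝ) (n m : ℕ) : ℝ :=
  ((Nat.factorial n : ℝ) / risingFact θ n) * (risingFact θ m / (Nat.factorial m : ℝ))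

/-!
Record the cycle type of `σ` as the multiset `σ.partition.parts` of its cycle lengths, fixed points
included, so that `k_i(σ)` is the multiplicity of `i` and `w(σ)` its cardinality. The key identity
is the deletion formula
`∑_σ k_i(σ) H(type σ) = C(n, i) (i-1)! ∑_{τ ∈ S_{n-i}} H(type τ + {i})`:
a permutation together with one of its orbits of size `i` amounts to an `i`-subset `s`, a cyclic
permutation of `s` (there are `(i-1)!` of them) and an arbitrary permutation of the complement.
As `(k)_{(j+1)} = k (k-1)_{(j)}`, it lowers `∑ j_i` by one at the cost of the factor
`C(n, i) (i-1)! θ = n (n-1) ⋯ (n-i+1) θ / i`. The induction ends at `∑_σ θ^{w(σ)} = θ^{(n)}`, which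
follows from the same formula, `n = ∑_i i k_i(σ)`, and the recursion
`n θ^{(n)} = θ ∑_{i=1}^n n (n-1) ⋯ (n-i+1) θ^{(n-i)}`.
-/

open Equiv Equiv.Perm

namespace Equiv.Perm

variable {α β M : Type*} [Fintype α] [DecidableEq α] [Fintype β] [DecidableEq β]
  [AddCommMonoid M]

omit [Fintype α] [DecidableEq α] in
theorem IsCycleOn.mem_of_sameCycle {σ : Perm α} {s : Finset α} (hσ : σ.IsCycleOn s) {a b : α}
    (ha : a ∈ s) (hab : σ.SameCycle a b) : b ∈ s := by
  obtain ⟨k, rfl⟩ := hab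
  exact (hσ.1.perm_zpow k).mapsTo ha

theorem IsCycleOn.support_cycleOf {σ : Perm α} {s : Finset α} (hσ : σ.IsCycleOn s)
    (hs : 1 < #s) {a : α} (ha : a ∈ s) : (σ.cycleOf a).support = s := by
  have hmoved : a ∈ σ.support :=
    mem_support.2 (hσ.apply_ne (one_lt_card_iff_nontrivial.1 hs) ha)
  ext b
  rw [mem_support_cycleOf_iff]
  exact ⟨fun h => hσ.mem_of_sameCycle ha h.1, fun hb => ⟨hσ.2 ha hb, hmoved⟩⟩

theorem count_one_partition_parts (σ : Perm α) :
    σ.partition.parts.count 1 = Fintype.card α - σ.cycleType.sum := by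
  rw [parts_partition, sum_cycleType, Multiset.count_add, Multiset.count_replicate_self,
    Multiset.count_eq_zero.2 fun h => by simpa using two_le_of_mem_cycleType h, zero_add]

theorem count_partition_parts_of_two_le (σ : Perm α) {i : ℕ} (hi : 2 ≤ i) :
    σ.partition.parts.count i = σ.cycleType.count i := by
  rw [parts_partition, Multiset.count_add, Multiset.count_replicate, if_neg (by omega), add_zero]

open scoped Classical in
theorem count_partition_parts_eq_card_isCycleOn (σ : Perm α) {i : ℕ} (hi : 1 ≤ i) :
    σ.partition.parts.count i = #{s : Finset α | σ.IsCycleOn s ∧ #s = i} := by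
  obtain rfl | hi := hi.eq_or_lt
  · have horbits : ({s : Finset α | σ.IsCycleOn s ∧ #s = 1} : Finset (Finset α)) =
        ({x | σ x = x} : Finset α).map ⟨singleton, singleton_injective⟩ := by
      ext s
      simp only [mem_filter, mem_univ, true_and, mem_map, Function.Embedding.coeFn_mk,
        card_eq_one]
      constructor
      · rintro ⟨hσ, a, rfl⟩
        exact ⟨a, by simpa using hσ, rfl⟩
      · rintro ⟨a, ha, rfl⟩
        exact ⟨by simpa using ha, a, rfl⟩
    have hfix : ({x | σ x = x} : Finset α) = σ.supportᶜ := by ext; simp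
    rw [count_one_partition_parts, horbits, card_map, hfix, card_compl, sum_cycleType]
  rw [count_partition_parts_of_two_le σ hi, cycleType_def, Multiset.count_map]
  change #{c ∈ σ.cycleFactorsFinset | i = #c.support} = _
  refine card_bij (fun c _ => c.support) ?_ ?_ ?_
  · intro c hc
    obtain ⟨hc, hci⟩ := mem_filter.1 hc
    simpa [hci] using isCycleOn_support_of_mem_cycleFactorsFinset hc
  · intro c hc d hd hcd
    obtain ⟨hc, hci⟩ := mem_filter.1 hc
    obtain ⟨a, ha⟩ := card_pos.1 (show 0 < #c.support by omega)
    rw [cycle_is_cycleOf ha hc, cycle_is_cycleOf (hcd ▸ ha) (mem_filter.1 hd).1]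
  · intro s hs
    obtain ⟨hσ, rfl⟩ := (mem_filter.1 hs).2
    obtain ⟨a, ha⟩ := card_pos.1 (by omega : 0 < #s)
    have hsupp := hσ.support_cycleOf hi ha
    refine ⟨σ.cycleOf a, mem_filter.2 ⟨?_, by rw [hsupp]⟩, hsupp⟩
    exact cycleOf_mem_cycleFactorsFinset_iff.2 (mem_support_cycleOf_iff.1 (hsupp ▸ ha)).2

omit [Fintype α] [DecidableEq α] in
theorem isCycleOn_of_subtypePerm {σ : Perm α} {s : Finset α} (h : ∀ x, σ x ∈ s ↔ x ∈ s)
    (hσ : (σ.subtypePerm h).IsCycleOn _root_.Set.univ) : σ.IsCycleOn s :=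
  ⟨σ.bijOn h, fun a ha b hb =>
    sameCycle_subtypePerm.1 (hσ.2 (_root_.Set.mem_univ ⟨a, ha⟩) (_root_.Set.mem_univ ⟨b, hb⟩))⟩

theorem partition_parts_subtypeCongr {p : α → Prop} [DecidablePred p]
    (c : Perm {a // p a}) (τ : Perm {a // ¬p a}) :
    (c.subtypeCongr τ).partition.parts = c.partition.parts + τ.partition.parts := by
  have hprod : c.subtypeCongr τ = ofSubtype c * ofSubtype τ := by
    ext x
    by_cases hx : p x
    · simp [subtypeCongr.left_apply, hx, ofSubtype_apply_of_mem, ofSubtype_apply_of_not_mem]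
    · simp [subtypeCongr.right_apply, hx, ofSubtype_apply_of_mem,
        ofSubtype_apply_of_not_mem c (τ ⟨x, hx⟩).2]
  have hdisj : (ofSubtype c).Disjoint (ofSubtype τ) := by
    intro x
    by_cases hx : p x
    · exact .inr (ofSubtype_apply_of_not_mem τ (not_not.2 hx))
    · exact .inl (ofSubtype_apply_of_not_mem c hx)
  have hcycleType : (c.subtypeCongr τ).cycleType = c.cycleType + τ.cycleType := by
    rw [hprod, hdisj.cycleType_mul, cycleType_ofSubtype, cycleType_ofSubtype]
  have hcard := Fintype.card_subtype_compl p
  have hc := sum_cycleType_le c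
  have hτ := sum_cycleType_le τ
  have hp := Fintype.card_subtype_le p
  simp only [parts_partition, ← sum_cycleType, hcycleType, Multiset.sum_add]
  rw [add_add_add_comm, ← Multiset.replicate_add]
  congr 2
  omega

theorem partition_parts_of_isCycleOn_univ [Nonempty β] {c : Perm β}
    (hc : c.IsCycleOn _root_.Set.univ) : c.partition.parts = {Fintype.card β} := by
  obtain hβ | hβ := subsingleton_or_nontrivial β
  · have hcard : Fintype.card β = 1 :=
      le_antisymm (Fintype.card_le_one_iff_subsingleton.2 hβ) Fintype.card_pos
    simp [Subsingleton.elim c 1, parts_partition, hcard]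
  · have hcycle : c.IsCycle :=
      isCycle_iff_exists_isCycleOn.2 ⟨_root_.Set.univ, _root_.Set.nontrivial_univ, hc, by simp⟩
    have hsupp : c.support = univ := eq_univ_of_forall fun x =>
      mem_support.2 (hc.apply_ne _root_.Set.nontrivial_univ (_root_.Set.mem_univ x))
    simp [parts_partition, hcycle.cycleType, hsupp]

open scoped Classical in
theorem card_isCycleOn_univ [Nonempty β] :
    #{c : Perm β | c.IsCycleOn _root_.Set.univ} = (Fintype.card β - 1).factorial := by
  obtain hβ | hβ := subsingleton_or_nontrivial β
  · have hcard : Fintype.card β = 1 :=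
      le_antisymm (Fintype.card_le_one_iff_subsingleton.2 hβ) Fintype.card_pos
    rw [filter_true_of_mem fun c _ => isCycleOn_of_subsingleton c _, card_univ,
      Fintype.card_perm, hcard]
    rfl
  · have hfull :
        ∀ c : Perm β, c.IsCycleOn _root_.Set.univ ↔ c.cycleType = {Fintype.card β} := by
      intro c
      constructor
      · intro hc
        rw [← filter_parts_partition_eq_cycleType, partition_parts_of_isCycleOn_univ hc]
        simpa [Nat.succ_le_iff] using (Fintype.one_lt_card : 1 < Fintype.card β)
      · intro hc
        have hcycle : c.IsCycle := card_cycleType_eq_one.1 (by simp [hc])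
        have hsupp : c.support = univ := eq_univ_of_card _ (by rw [← sum_cycleType, hc]; simp)
        simpa [← mem_support, hsupp] using hcycle.isCycleOn
    rw [filter_congr fun c _ => hfull c, card_of_cycleType_singleton Fintype.one_lt_card le_rfl,
      Nat.choose_self, mul_one]

theorem cycleType_permCongr (e : α ≃ β) (σ : Perm α) :
    (e.permCongr σ).cycleType = σ.cycleType := by
  have he :
      e.permCongr σ = σ.extendDomain (e.trans (subtypeUnivEquiv fun _ => trivial).symm) := by
    ext b
    simp [extendDomain_apply_subtype, permCongr_apply]
  rw [he, cycleType_extendDomain]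

theorem partition_parts_permCongr (e : α ≃ β) (σ : Perm α) :
    (e.permCongr σ).partition.parts = σ.partition.parts := by
  simp only [parts_partition, ← sum_cycleType, cycleType_permCongr, Fintype.card_congr e]

theorem sum_partition_parts_congr (e : α ≃ β)
    (F : Multiset ℕ → M) :
    ∑ σ : Perm α, F σ.partition.parts = ∑ τ : Perm β, F τ.partition.parts :=
  Fintype.sum_equiv e.permCongr _ _ fun σ => by rw [partition_parts_permCongr]

open scoped Classical in
theorem sum_isCycleOn_eq_sum_subtypeCongr (s : Finset α) (F : Perm α → M) :
    ∑ σ with σ.IsCycleOn s, F σ =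
      ∑ c : Perm s with c.IsCycleOn _root_.Set.univ, ∑ τ : Perm {a // a ∉ s},
        F (c.subtypeCongr τ) := by
  rw [← sum_product (f := fun p : Perm s × Perm {a // a ∉ s} => F (p.1.subtypeCongr p.2))]
  symm
  refine sum_bij' (fun p _ => p.1.subtypeCongr p.2)
    (fun σ hσ => (σ.subtypePerm fun _ => (mem_filter.1 hσ).2.apply_mem_iff,
      σ.subtypePerm fun _ => not_congr (mem_filter.1 hσ).2.apply_mem_iff)) ?_ ?_ ?_ ?_ ?_
  · rintro ⟨c, τ⟩ hp
    have hc := (mem_filter.1 (mem_product.1 hp).1).2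
    have hinv : ∀ x, c.subtypeCongr τ x ∈ s ↔ x ∈ s := fun x => by
      by_cases hx : x ∈ s <;> simp [hx, (τ ⟨x, _⟩).2]
    refine mem_filter.2 ⟨mem_univ _, isCycleOn_of_subtypePerm hinv ?_⟩
    convert hc
    ext x
    simp [subtypeCongr.left_apply]
  · intro σ hσ
    exact mem_product.2 ⟨mem_filter.2 ⟨mem_univ _, (mem_filter.1 hσ).2.subtypePerm⟩, mem_univ _⟩
  · rintro ⟨c, τ⟩ _
    ext x <;> simp [subtypeCongr.left_apply]
  · intro σ _
    ext x
    by_cases hx : x ∈ s <;> simp [subtypeCongr.left_apply, subtypeCongr.right_apply, hx]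
  · intro _ _
    rfl

open scoped Classical in
theorem sum_isCycleOn_partition_parts {s : Finset α}
    (hs : s.Nonempty) (hβ : Fintype.card β = Fintype.card α - #s) (H : Multiset ℕ → M) :
    ∑ σ : Perm α with σ.IsCycleOn s, H σ.partition.parts =
      (#s - 1).factorial • ∑ τ : Perm β, H (#s ::ₘ τ.partition.parts) := by
  have : Nonempty s := hs.to_subtype
  have hparts : ∀ c : Perm s, c.IsCycleOn _root_.Set.univ → ∀ τ : Perm {a // a ∉ s},
      (c.subtypeCongr τ).partition.parts = #s ::ₘ τ.partition.parts := fun c hc τ => by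
    rw [partition_parts_subtypeCongr, ← Multiset.singleton_add, ← Fintype.card_coe s]
    congr 1
    convert partition_parts_of_isCycleOn_univ hc
  have hcard : Fintype.card {a // a ∉ s} = Fintype.card β := by
    rw [Fintype.card_subtype_compl, Fintype.card_coe, hβ]
  rw [sum_isCycleOn_eq_sum_subtypeCongr, sum_congr rfl fun c hc => sum_congr rfl fun τ _ => by
      rw [hparts c (mem_filter.1 hc).2], sum_const, card_isCycleOn_univ, Fintype.card_coe,
    sum_partition_parts_congr (Fintype.equivOfCardEq hcard) fun μ => H (#s ::ₘ μ)]

open scoped Classical in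
theorem sum_count_partition_parts_smul {i : ℕ} (hi : 1 ≤ i)
    (hβ : Fintype.card β = Fintype.card α - i) (H : Multiset ℕ → M) :
    ∑ σ : Perm α, σ.partition.parts.count i • H σ.partition.parts =
      ((Fintype.card α).choose i * (i - 1).factorial) •
        ∑ τ : Perm β, H (i ::ₘ τ.partition.parts) := by
  calc ∑ σ : Perm α, σ.partition.parts.count i • H σ.partition.parts
      = ∑ σ : Perm α, ∑ s ∈ univ.filter fun s : Finset α => σ.IsCycleOn s ∧ #s = i,
          H σ.partition.parts := by
        simp only [count_partition_parts_eq_card_isCycleOn _ hi, sum_const]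
    _ = ∑ s : Finset α with #s = i, ∑ σ : Perm α with σ.IsCycleOn s, H σ.partition.parts :=
        sum_comm' fun _ _ => by simp only [mem_filter, mem_univ, true_and]
    _ = ∑ s : Finset α with #s = i, (i - 1).factorial •
          ∑ τ : Perm β, H (i ::ₘ τ.partition.parts) :=
        sum_congr rfl fun s hs => by
          obtain rfl := (mem_filter.1 hs).2
          exact sum_isCycleOn_partition_parts (card_pos.1 (by omega)) hβ H
    _ = _ := by
        rw [sum_const, ← powerset_univ, ← powersetCard_eq_filter, card_powersetCard, card_univ,
          mul_smul]

end Equiv.Perm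

theorem Multiset.prod_descFactorial_count_add_single {α : Type*} [DecidableEq α]
    (μ : Multiset α) {I : Finset α} {a : α} (ha : a ∈ I) (f : α → ℕ) :
    ∏ i ∈ I, (μ.count i).descFactorial (f i + (Pi.single a 1 : α → ℕ) i) =
      μ.count a * ∏ i ∈ I, ((μ.erase a).count i).descFactorial (f i) := by
  rw [← mul_prod_erase I _ ha, ← mul_prod_erase I _ ha, ← mul_assoc, Pi.single_eq_same,
    Multiset.count_erase_self]
  congr 1
  · cases μ.count a
    · simp
    · rw [Nat.succ_descFactorial_succ, Nat.add_sub_cancel]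
  · refine prod_congr rfl fun i hi => ?_
    have hia := ne_of_mem_erase hi
    rw [Pi.single_eq_of_ne hia, add_zero, Multiset.count_erase_of_ne hia]

theorem risingFact_succ (θ : ℝ) (n : ℕ) : risingFact θ (n + 1) = risingFact θ n * (θ + n) :=
  prod_range_succ _ _

theorem mul_risingFact_eq_sum (θ : ℝ) (n : ℕ) :
    n * risingFact θ n = θ * ∑ i ∈ Icc 1 n, (n.descFactorial i : ℝ) * risingFact θ (n - i) := by
  rw [← Ico_add_one_right_eq_Icc, sum_Ico_eq_sum_range, Nat.add_sub_cancel]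
  induction n with
  | zero => simp
  | succ n ih =>
    have hshift : ∑ i ∈ range n, ((n + 1).descFactorial (1 + (i + 1)) : ℝ) *
        risingFact θ (n + 1 - (1 + (i + 1))) =
          (n + 1) * ∑ i ∈ range n, (n.descFactorial (1 + i) : ℝ) * risingFact θ (n - (1 + i)) := by
      rw [mul_sum]
      refine sum_congr rfl fun i _ => ?_
      rw [show 1 + (i + 1) = (1 + i) + 1 by ring, Nat.succ_descFactorial_succ,
        Nat.add_sub_add_right]
      push_cast
      ring
    rw [sum_range_succ', hshift, risingFact_succ]
    simp only [add_zero, Nat.succ_descFactorial_succ, Nat.descFactorial_zero]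
    push_cast
    linear_combination (n + 1 : ℝ) * ih

theorem Nat.choose_mul_factorial_pred_mul (n : ℕ) {i : ℕ} (hi : 1 ≤ i) :
    n.choose i * (i - 1).factorial * i = n.descFactorial i := by
  rw [Nat.descFactorial_eq_factorial_mul_choose, ← Nat.mul_factorial_pred (n := i) (by omega)]
  ring

theorem Nat.Partition.sum_count_mul {n : ℕ} (p : n.Partition) :
    ∑ i ∈ Icc 1 n, p.parts.count i * i = n := by
  have hsupp : p.parts.toFinset ⊆ Icc 1 n := fun i hi =>
    mem_Icc.2 ⟨p.parts_pos (Multiset.mem_toFinset.1 hi),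
      p.le_of_mem_parts (Multiset.mem_toFinset.1 hi)⟩
  simpa [p.parts_sum] using (sum_multiset_count_of_subset p.parts _ hsupp).symm

theorem sum_pow_card_partition_parts (θ : ℝ) (n : ℕ) :
    ∑ σ : Perm (Fin n), θ ^ Multiset.card σ.partition.parts = risingFact θ n := by
  induction n using Nat.strong_induction_on with
  | _ n ih =>
  obtain rfl | hn := n.eq_zero_or_pos
  · simp [risingFact, parts_partition]
  refine mul_left_cancel₀ (Nat.cast_ne_zero.2 hn.ne') ?_
  calc (n : ℝ) * ∑ σ : Perm (Fin n), θ ^ Multiset.card σ.partition.parts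
      = ∑ i ∈ Icc 1 n, (i : ℝ) * ∑ σ : Perm (Fin n),
          σ.partition.parts.count i • θ ^ Multiset.card σ.partition.parts := by
        simp only [mul_sum, nsmul_eq_mul]
        rw [sum_comm]
        refine sum_congr rfl fun σ _ => ?_
        have hcount : (n : ℝ) = ∑ i ∈ Icc 1 n, (σ.partition.parts.count i * i : ℝ) := by
          have := σ.partition.sum_count_mul
          simp only [Fintype.card_fin] at this
          exact_mod_cast this.symm
        rw [hcount, sum_mul]
        exact sum_congr rfl fun _ _ => by ring
    _ = θ * ∑ i ∈ Icc 1 n, (n.descFactorial i : ℝ) * risingFact θ (n - i) := by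
        rw [mul_sum]
        refine sum_congr rfl fun i hi => ?_
        have hi := (mem_Icc.1 hi).1
        rw [sum_count_partition_parts_smul (β := Fin (n - i)) hi (by simp)
          fun μ => θ ^ Multiset.card μ]
        simp only [Fintype.card_fin, Multiset.card_cons, pow_succ, ← sum_mul, nsmul_eq_mul]
        rw [ih (n - i) (by omega), ← Nat.choose_mul_factorial_pred_mul n hi]
        push_cast
        ring
    _ = n * risingFact θ n := (mul_risingFact_eq_sum θ n).symm

noncomputable def weightedFactorialMoment (θ : ℝ) (n : ℕ) (I : Finset ℕ) (j : ℕ → ℕ) : ℝ :=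
  ∑ σ : Perm (Fin n), θ ^ Multiset.card σ.partition.parts *
    ∏ i ∈ I, ((σ.partition.parts.count i).descFactorial (j i) : ℝ)

theorem weightedFactorialMoment_add_single (θ : ℝ) (n : ℕ) {I : Finset ℕ} {a : ℕ} (ha : a ∈ I)
    (ha1 : 1 ≤ a) (j : ℕ → ℕ) :
    weightedFactorialMoment θ n I (j + Pi.single a 1) =
      n.choose a * (a - 1).factorial * θ * weightedFactorialMoment θ (n - a) I j := by
  set H : Multiset ℕ → ℝ := fun μ =>
    θ ^ Multiset.card μ * ∏ i ∈ I, (((μ.erase a).count i).descFactorial (j i) : ℝ) with hH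
  calc weightedFactorialMoment θ n I (j + Pi.single a 1)
      = ∑ σ : Perm (Fin n), σ.partition.parts.count a • H σ.partition.parts := by
        refine sum_congr rfl fun σ _ => ?_
        simp only [hH, Pi.add_apply, nsmul_eq_mul]
        rw [← Nat.cast_prod, Multiset.prod_descFactorial_count_add_single _ ha j, ← Nat.cast_prod]
        push_cast
        ring
    _ = n.choose a * (a - 1).factorial * θ * weightedFactorialMoment θ (n - a) I j := by
        rw [sum_count_partition_parts_smul (β := Fin (n - a)) ha1 (by simp),
          weightedFactorialMoment]
        simp only [hH, Multiset.erase_cons_head, Multiset.card_cons, pow_succ, mul_sum,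
          nsmul_eq_mul, Fintype.card_fin]
        push_cast
        exact sum_congr rfl fun _ _ => by ring

theorem weightedFactorialMoment_eq (θ : ℝ) (n : ℕ) {I : Finset ℕ} (hI : ∀ i ∈ I, 1 ≤ i)
    (j : ℕ → ℕ) :
    weightedFactorialMoment θ n I j =
      n.descFactorial (∑ i ∈ I, i * j i) * risingFact θ (n - ∑ i ∈ I, i * j i) *
        ∏ i ∈ I, (θ / i) ^ j i := by
  induction hN : ∑ i ∈ I, j i generalizing n j with
  | zero =>
    have hj : ∀ i ∈ I, j i = 0 := sum_eq_zero_iff.1 hN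
    simp +contextual [weightedFactorialMoment, hj, sum_pow_card_partition_parts]
  | succ N ih =>
    obtain ⟨a, ha, hja⟩ : ∃ a ∈ I, j a ≠ 0 := exists_ne_zero_of_sum_ne_zero (by omega)
    obtain ⟨j, rfl⟩ : ∃ j' : ℕ → ℕ, j = j' + Pi.single a 1 :=
      ⟨j - Pi.single a 1, by ext i; by_cases hi : i = a <;> simp [hi]; omega⟩
    have hl : ∑ i ∈ I, i * (j + Pi.single a 1 : ℕ → ℕ) i = a + ∑ i ∈ I, i * j i := by
      simp [mul_add, sum_add_distrib, Pi.single_apply, ha, add_comm]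
    have hprod : ∏ i ∈ I, (θ / i) ^ (j + Pi.single a 1 : ℕ → ℕ) i =
        (∏ i ∈ I, (θ / i) ^ j i) * (θ / a) := by
      simp only [Pi.add_apply, pow_add, prod_mul_distrib]
      congr 1
      rw [prod_eq_single_of_mem a ha fun i _ hia => by rw [Pi.single_eq_of_ne hia, pow_zero],
        Pi.single_eq_same, pow_one]
    have ha1 := hI a ha
    rw [weightedFactorialMoment_add_single θ n ha ha1,
      ih (n - a) j (by simpa [sum_add_distrib, ha] using hN), hl, hprod,
      ← Nat.descFactorial_mul_descFactorial (m := a + ∑ i ∈ I, i * j i) (k := a) (by omega),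
      Nat.add_sub_cancel_left, ← Nat.choose_mul_factorial_pred_mul n ha1, Nat.sub_sub]
    push_cast
    field_simp

theorem cycCount_eq_count_partition_parts {n : ℕ} (σ : Perm (Fin n)) {i : ℕ} (hi : 1 ≤ i) :
    cycCount σ i = σ.partition.parts.count i := by
  unfold cycCount
  split_ifs with h
  · rw [h, count_one_partition_parts, Fintype.card_fin]
  · rw [count_partition_parts_of_two_le σ (by omega)]

theorem numCyc_eq_card_partition_parts {n : ℕ} (σ : Perm (Fin n)) :
    numCyc σ = Multiset.card σ.partition.parts := by
  simp [numCyc, parts_partition, sum_cycleType]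

theorem watterson_formula_general (θ : ℝ) (n r : ℕ)
    (j : ℕ → ℕ) (l : ℕ) (hl : l = ∑ i ∈ Finset.Icc 1 r, i * j i) :
    ewensE θ n (fun σ => ∏ i ∈ Finset.Icc 1 r, (Nat.descFactorial (cycCount σ i) (j i) : ℝ)) =
      (if l ≤ n then psiRF θ n (n - l) else 0) * ∏ i ∈ Finset.Icc 1 r, (θ / i) ^ (j i) := by
  have hnumer : ∑ σ : Perm (Fin n),
      θ ^ numCyc σ * ∏ i ∈ Icc 1 r, ((cycCount σ i).descFactorial (j i) : ℝ) =
        n.descFactorial l * risingFact θ (n - l) * ∏ i ∈ Icc 1 r, (θ / i) ^ j i := by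
    rw [hl, ← weightedFactorialMoment_eq θ n (fun i hi => (mem_Icc.1 hi).1) j]
    refine sum_congr rfl fun σ _ => ?_
    rw [numCyc_eq_card_partition_parts]
    congr 1
    exact prod_congr rfl fun i hi => by rw [cycCount_eq_count_partition_parts σ (mem_Icc.1 hi).1]
  rw [ewensE, hnumer]
  split_ifs with hln
  · rw [psiRF, ← Nat.factorial_mul_descFactorial hln]
    push_cast
    field_simp
  · rw [Nat.descFactorial_eq_zero_iff_lt.2 (by omega)]
    simp

/-- Watterson's formula for the Ewens measure. -/
theorem watterson_formula (θ : ℝ) (hθ : 0 < θ) (n r : ℕ) (hr1 : 1 ≤ r) (hrn : r ≤ n)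
    (j : ℕ → ℕ) (l : ℕ) (hl : l = ∑ i ∈ Finset.Icc 1 r, i * j i) :
    ewensE θ n (fun σ => ∏ i ∈ Finset.Icc 1 r, (Nat.descFactorial (cycCount σ i) (j i) : ℝ)) =
      (if l ≤ n then psiRF θ n (n - l) else 0) * ∏ i ∈ Finset.Icc 1 r, (θ / i) ^ (j i) :=
  watterson_formula_general θ n r j l hl
end

section
/- Let θ ≥ 1, J_n ⊂ {1,...,n}, and define υ_n(l) = θ^l Σ_{j_1+...+j_l < n, all j_i ∈ J_n} (1/(j_1···j_l)) (1 - (j_1+...+j_l)/n)^{θ-1}. Then υ_n(l) ≤ υ_n(1)^l for every n, l ∈ N. -/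
/-!
Put `x_i = j_i / n`. The Weierstrass product inequality `1 - ∑ x_i ≤ ∏ (1 - x_i)`, raised to the
power `θ - 1 ≥ 0`, bounds each summand of `υ_n(l)` by the product of the summands of `υ_n(1)` at
`j_1, …, j_l`. Dropping the constraint `j_1 + ⋯ + j_l < n` (keeping only `j_i < n`) adds
nonnegative terms, and the resulting sum over all `l`-tuples factors as `(υ_n(1) / θ)^l`.
-/

open Finset Real

/-- `υ_n(l) = θ^l Σ_{j_1+⋯+j_l < n, j_i ∈ J} (1/(j_1⋯j_l)) (1 - (j_1+⋯+j_l)/n)^{θ-1}`. -/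
noncomputable def upsilon (θ : ℝ) (n : ℕ) (J : Finset ℕ) (l : ℕ) : ℝ :=
  θ ^ l * ∑ j ∈ (Fintype.piFinset fun _ : Fin l => J).filter (fun j => ∑ i, j i < n),
    (∏ i, (j i : ℝ))⁻¹ * (1 - (∑ i, j i : ℝ) / n) ^ (θ - 1)

theorem one_sub_sum_le_prod_one_sub {ι R : Type*} [CommRing R] [LinearOrder R]
    [IsStrictOrderedRing R] (s : Finset ι) (f : ι → R) (h0 : ∀ i ∈ s, 0 ≤ f i)
    (h1 : ∀ i ∈ s, f i ≤ 1) :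
    1 - ∑ i ∈ s, f i ≤ ∏ i ∈ s, (1 - f i) := by
  induction s using Finset.cons_induction with
  | empty => simp
  | cons a s ha ih =>
    rw [sum_cons, prod_cons]
    have ha0 := h0 a (mem_cons_self a s)
    have hs0 : 0 ≤ ∑ i ∈ s, f i := sum_nonneg fun i hi => h0 i (mem_cons_of_mem hi)
    have ih := ih (fun i hi => h0 i (mem_cons_of_mem hi)) (fun i hi => h1 i (mem_cons_of_mem hi))
    calc 1 - (f a + ∑ i ∈ s, f i) ≤ (1 - f a) * (1 - ∑ i ∈ s, f i) := by
          nlinarith [mul_nonneg ha0 hs0]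
      _ ≤ (1 - f a) * ∏ i ∈ s, (1 - f i) :=
          mul_le_mul_of_nonneg_left ih (sub_nonneg.2 (h1 a (mem_cons_self a s)))

theorem one_sub_sum_rpow_le_prod {ι : Type*} (s : Finset ι) (x : ι → ℝ)
    (h0 : ∀ i ∈ s, 0 ≤ x i) (h1 : ∀ i ∈ s, x i ≤ 1) (hsum : ∑ i ∈ s, x i ≤ 1) {p : ℝ}
    (hp : 0 ≤ p) :
    (1 - ∑ i ∈ s, x i) ^ p ≤ ∏ i ∈ s, (1 - x i) ^ p := by
  rw [Real.finsetProd_rpow s _ fun i hi => sub_nonneg.2 (h1 i hi)]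
  exact rpow_le_rpow (sub_nonneg.2 hsum) (one_sub_sum_le_prod_one_sub s x h0 h1) hp

noncomputable def upsilonWeight (θ : ℝ) (n j : ℕ) : ℝ :=
  (j : ℝ)⁻¹ * (1 - j / n) ^ (θ - 1)

theorem upsilonWeight_nonneg (θ : ℝ) {n j : ℕ} (hj : j ≤ n) : 0 ≤ upsilonWeight θ n j :=
  mul_nonneg (by positivity)
    (rpow_nonneg (sub_nonneg.2 (div_le_one_of_le₀ (by exact_mod_cast hj) n.cast_nonneg)) _)

theorem upsilon_one (θ : ℝ) (n : ℕ) (J : Finset ℕ) :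
    upsilon θ n J 1 = θ * ∑ j ∈ J with j < n, upsilonWeight θ n j := by
  rw [upsilon, pow_one]
  congr 1
  refine sum_nbij' (fun j => j 0) (fun k _ => k) ?_ ?_ ?_ ?_ ?_ <;>
    simp [upsilonWeight, funext_iff, Fin.forall_fin_one]

theorem inv_prod_mul_one_sub_sum_rpow_le_prod_upsilonWeight {ι : Type*} [Fintype ι] {θ : ℝ}
    (hθ : 1 ≤ θ) {n : ℕ} (j : ι → ℕ) (hj : ∑ i, j i ≤ n) :
    (∏ i, (j i : ℝ))⁻¹ * (1 - (∑ i, j i : ℝ) / n) ^ (θ - 1) ≤ ∏ i, upsilonWeight θ n (j i) := by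
  have hjn : ∀ i, j i ≤ n := fun i => (single_le_sum (fun _ _ => Nat.zero_le _) (mem_univ i)).trans hj
  have hsum : ∑ i, (j i : ℝ) / n ≤ 1 := by
    rw [← sum_div]; exact div_le_one_of_le₀ (by exact_mod_cast hj) n.cast_nonneg
  calc (∏ i, (j i : ℝ))⁻¹ * (1 - (∑ i, j i : ℝ) / n) ^ (θ - 1)
      ≤ (∏ i, (j i : ℝ))⁻¹ * ∏ i, (1 - (j i : ℝ) / n) ^ (θ - 1) := by
        rw [sum_div]
        refine mul_le_mul_of_nonneg_left (one_sub_sum_rpow_le_prod _ _ (fun i _ => by positivity)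
          (fun i _ => div_le_one_of_le₀ (by exact_mod_cast hjn i) n.cast_nonneg) hsum
          (by linarith)) (by positivity)
    _ = ∏ i, upsilonWeight θ n (j i) := by
        rw [← prod_inv_distrib, ← prod_mul_distrib]; rfl

theorem sum_upsilon_le_sum_upsilonWeight_pow {θ : ℝ} (hθ : 1 ≤ θ) (n : ℕ) (J : Finset ℕ) (l : ℕ) :
    ∑ j ∈ (Fintype.piFinset fun _ : Fin l => J).filter (fun j => ∑ i, j i < n),
      (∏ i, (j i : ℝ))⁻¹ * (1 - (∑ i, j i : ℝ) / n) ^ (θ - 1)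
      ≤ (∑ j ∈ J with j < n, upsilonWeight θ n j) ^ l := by
  have hsub : (Fintype.piFinset fun _ : Fin l => J).filter (fun j => ∑ i, j i < n) ⊆
      Fintype.piFinset fun _ => J.filter (· < n) := by
    intro j hj
    simp only [mem_filter, Fintype.mem_piFinset] at hj ⊢
    exact fun i => ⟨hj.1 i, (single_le_sum (fun _ _ => Nat.zero_le _) (mem_univ i)).trans_lt hj.2⟩
  rw [sum_pow']
  calc _ ≤ ∑ j ∈ (Fintype.piFinset fun _ : Fin l => J).filter (fun j => ∑ i, j i < n),
        ∏ i, upsilonWeight θ n (j i) :=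
        sum_le_sum fun j hj =>
          inv_prod_mul_one_sub_sum_rpow_le_prod_upsilonWeight hθ j (mem_filter.1 hj).2.le
    _ ≤ _ := sum_le_sum_of_subset_of_nonneg hsub fun j hj _ => prod_nonneg fun i _ =>
        upsilonWeight_nonneg θ (mem_filter.1 (Fintype.mem_piFinset.1 hj i)).2.le

theorem upsilon_le_pow_general (θ : ℝ) (hθ : 1 ≤ θ) (n : ℕ) (J : Finset ℕ) (l : ℕ) :
    upsilon θ n J l ≤ (upsilon θ n J 1) ^ l := by
  rw [upsilon_one, mul_pow, upsilon]
  exact mul_le_mul_of_nonneg_left (sum_upsilon_le_sum_upsilonWeight_pow hθ n J l) (pow_nonneg (by linarith) l)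

theorem upsilon_le_pow (θ : ℝ) (hθ : 1 ≤ θ) (n : ℕ) (J : Finset ℕ)
    (hJ : J ⊆ Finset.Icc 1 n) (l : ℕ) (hl : 1 ≤ l) :
    upsilon θ n J l ≤ (upsilon θ n J 1) ^ l :=
  upsilon_le_pow_general θ hθ n J l
end

section
/- For θ > 0 and any u ≥ 1 and n ≥ 2, the sum r_{nu} := n^{1-θ} Σ_{j_1,...,j_u ≤ n} 1{j_1+...+j_u = n}/(j_1···j_u) satisfies r_{nu} ≤ c_u (log n)^{u-1}/n^θ for a constant c_u depending only on u. -/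
open Finset Real

/-!
Every tuple of positive integers summing to `n` has a coordinate `j i ≥ n / u`. Splitting the sum
according to such a coordinate, that factor contributes at most `u / n`, and deleting it is
injective (the remaining coordinates and the total `n` recover it), so what is left is bounded by
the unconstrained sum `(∑_{m ≤ n} 1 / m) ^ (u - 1) = H_n ^ (u - 1) ≤ (3 log n) ^ (u - 1)`.
Multiplying by `n ^ (1 - θ)` gives `r_{nu} ≤ u² H_n ^ (u - 1) / n ^ θ`.
-/

theorem Finset.sum_le_sum_sum_filter_of_forall_exists {α β M : Type*} [AddCommMonoid M]
    [PartialOrder M] [IsOrderedAddMonoid M] {s : Finset α} {t : Finset β} {f : α → M}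
    (P : β → α → Prop) [∀ i, DecidablePred (P i)] (hf : ∀ a ∈ s, 0 ≤ f a)
    (hP : ∀ a ∈ s, ∃ i ∈ t, P i a) :
    ∑ a ∈ s, f a ≤ ∑ i ∈ t, ∑ a ∈ s with P i a, f a := by
  simp_rw [sum_filter]
  rw [sum_comm]
  refine sum_le_sum fun a ha => ?_
  obtain ⟨i, hi, hPi⟩ := hP a ha
  calc f a = if P i a then f a else 0 := (if_pos hPi).symm
    _ ≤ ∑ k ∈ t, if P k a then f a else 0 :=
      single_le_sum (f := fun k => if P k a then f a else 0)
        (fun k _ => by split_ifs <;> simp [hf a ha]) hi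

theorem exists_le_card_mul_of_sum_eq {ι : Type*} [Fintype ι] {j : ι → ℕ} {n : ℕ}
    (hj : ∑ i, j i = n) (hn : 0 < n) : ∃ i, n ≤ Fintype.card ι * j i := by
  obtain ⟨i₀, -, -⟩ := exists_ne_zero_of_sum_ne_zero (hj ▸ hn.ne')
  obtain ⟨i, -, hi⟩ := exists_le_of_sum_le (s := univ) (f := fun _ => n)
    (g := fun i => Fintype.card ι * j i) ⟨i₀, mem_univ _⟩ (by simp [← mul_sum, hj])
  exact ⟨i, hi⟩

def positiveCompositions (ι : Type*) [Fintype ι] [DecidableEq ι] (n : ℕ) : Finset (ι → ℕ) :=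
  (Fintype.piFinset fun _ : ι => Icc 1 n).filter fun j => ∑ i, j i = n

theorem sum_piFinset_Icc_inv_prod (κ : Type*) [Fintype κ] [DecidableEq κ] (n : ℕ) :
    ∑ x ∈ Fintype.piFinset (fun _ : κ => Icc 1 n), (∏ k, (x k : ℝ))⁻¹
      = (harmonic n : ℝ) ^ Fintype.card κ := by
  simp_rw [← prod_inv_distrib]
  rw [← prod_univ_sum (fun _ => Icc 1 n) fun _ x => (x : ℝ)⁻¹, prod_const, harmonic_eq_sum_Icc]
  push_cast
  rfl

theorem harmonic_le_three_mul_log {n : ℕ} (hn : 2 ≤ n) : (harmonic n : ℝ) ≤ 3 * log n := by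
  have h2 : log 2 ≤ log n := log_le_log (by norm_num) (by exact_mod_cast hn)
  linarith [harmonic_le_one_add_log n, log_two_gt_d9]

section Compositions

variable {ι : Type*} [Fintype ι] [DecidableEq ι]

theorem injOn_restrict_ne_of_sum_eq (i : ι) (n : ℕ) :
    Set.InjOn (fun (j : ι → ℕ) (k : {k // k ≠ i}) => j k) {j | ∑ k, j k = n} := by
  intro j hj j' hj' h
  have hoff : ∀ k, k ≠ i → j k = j' k := fun k hk => congrFun h ⟨k, hk⟩
  have hi : j i = j' i := by
    have := hj.trans hj'.symm
    simp only [Fintype.sum_eq_add_sum_subtype_ne _ i, fun k : {k // k ≠ i} => hoff k k.2] at this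
    omega
  funext k
  by_cases hk : k = i
  · exact hk ▸ hi
  · exact hoff k hk

theorem sum_positiveCompositions_inv_prod_ne_le (i : ι) (n : ℕ) :
    ∑ j ∈ positiveCompositions ι n, (∏ k : {k // k ≠ i}, (j k : ℝ))⁻¹
      ≤ (harmonic n : ℝ) ^ (Fintype.card ι - 1) := by
  rw [← sum_image (s := positiveCompositions ι n) (g := fun j (k : {k // k ≠ i}) => j k)
    (f := fun x => (∏ k, (x k : ℝ))⁻¹)
    fun j hj j' hj' => injOn_restrict_ne_of_sum_eq i n (mem_filter.1 hj).2 (mem_filter.1 hj').2]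
  calc _ ≤ ∑ x ∈ Fintype.piFinset (fun _ : {k // k ≠ i} => Icc 1 n), (∏ k, (x k : ℝ))⁻¹ := by
        refine sum_le_sum_of_subset_of_nonneg ?_ fun _ _ _ => by positivity
        intro x hx
        obtain ⟨j, hj, rfl⟩ := mem_image.1 hx
        simp only [positiveCompositions, mem_filter, Fintype.mem_piFinset] at hj ⊢
        exact fun k => hj.1 k
    _ = _ := by
        rw [sum_piFinset_Icc_inv_prod, ← Set.card_ne_eq i]
        rfl

theorem sum_positiveCompositions_filter_le (i : ι) {n : ℕ} (hn : 0 < n) :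
    ∑ j ∈ positiveCompositions ι n with n ≤ Fintype.card ι * j i, (∏ k, (j k : ℝ))⁻¹
      ≤ Fintype.card ι / n * (harmonic n : ℝ) ^ (Fintype.card ι - 1) := by
  have hterm : ∀ j ∈ (positiveCompositions ι n).filter (n ≤ Fintype.card ι * · i),
      (∏ k, (j k : ℝ))⁻¹ ≤ Fintype.card ι / n * (∏ k : {k // k ≠ i}, (j k : ℝ))⁻¹ := by
    intro j hj
    simp only [positiveCompositions, mem_filter, Fintype.mem_piFinset, mem_Icc] at hj
    have hji : (0 : ℝ) < j i := by exact_mod_cast hj.1.1 i |>.1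
    rw [Fintype.prod_eq_mul_prod_subtype_ne _ i, mul_inv]
    gcongr
    rw [inv_eq_one_div, div_le_div_iff₀ hji (by exact_mod_cast hn), one_mul]
    exact_mod_cast hj.2
  calc _ ≤ ∑ j ∈ positiveCompositions ι n with n ≤ Fintype.card ι * j i,
          Fintype.card ι / n * (∏ k : {k // k ≠ i}, (j k : ℝ))⁻¹ := sum_le_sum hterm
    _ = Fintype.card ι / n *
          ∑ j ∈ positiveCompositions ι n with n ≤ Fintype.card ι * j i,
            (∏ k : {k // k ≠ i}, (j k : ℝ))⁻¹ := (mul_sum _ _ _).symm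
    _ ≤ Fintype.card ι / n *
          ∑ j ∈ positiveCompositions ι n, (∏ k : {k // k ≠ i}, (j k : ℝ))⁻¹ := by
        gcongr
        exact filter_subset _ _
    _ ≤ _ := by gcongr; exact sum_positiveCompositions_inv_prod_ne_le i n

theorem sum_positiveCompositions_inv_prod_le {n : ℕ} (hn : 0 < n) :
    ∑ j ∈ positiveCompositions ι n, (∏ k, (j k : ℝ))⁻¹
      ≤ Fintype.card ι * (Fintype.card ι / n * (harmonic n : ℝ) ^ (Fintype.card ι - 1)) := by
  calc _ ≤ ∑ i, ∑ j ∈ positiveCompositions ι n with n ≤ Fintype.card ι * j i,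
          (∏ k, (j k : ℝ))⁻¹ :=
        sum_le_sum_sum_filter_of_forall_exists _ (fun _ _ => by positivity) fun j hj =>
          (exists_le_card_mul_of_sum_eq (mem_filter.1 hj).2 hn).imp fun i hi => ⟨mem_univ i, hi⟩
    _ ≤ ∑ _i : ι, Fintype.card ι / n * (harmonic n : ℝ) ^ (Fintype.card ι - 1) :=
        sum_le_sum fun i _ => sum_positiveCompositions_filter_le i hn
    _ = _ := by rw [sum_const, card_univ, nsmul_eq_mul]

end Compositions

theorem r_nu_bound_general (u : ℕ) :
    ∃ c > (0:ℝ), ∀ θ : ℝ, 0 < θ → ∀ n : ℕ, 2 ≤ n →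
      (n : ℝ) ^ (1 - θ) *
        ∑ j ∈ (Fintype.piFinset fun _ : Fin u => Finset.Icc 1 n).filter
            (fun j => ∑ i, j i = n), (∏ i, (j i : ℝ))⁻¹
      ≤ c * (Real.log n) ^ (u - 1) / (n : ℝ) ^ θ := by
  refine ⟨(u + 1 : ℝ) ^ 2 * 3 ^ (u - 1), by positivity, fun θ _ n hn => ?_⟩
  have hn0 : (0 : ℝ) < n := by positivity
  have hH : (0 : ℝ) ≤ harmonic n := by exact_mod_cast (harmonic_pos (by omega)).le
  have key := sum_positiveCompositions_inv_prod_le (ι := Fin u) (n := n) (by omega)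
  rw [Fintype.card_fin] at key
  calc _ ≤ (n : ℝ) ^ (1 - θ) * (u * (u / n * (harmonic n : ℝ) ^ (u - 1))) := by gcongr; exact key
    _ = u ^ 2 * (harmonic n : ℝ) ^ (u - 1) / (n : ℝ) ^ θ := by
        rw [rpow_sub hn0, rpow_one]; field_simp
    _ ≤ (u + 1) ^ 2 * (3 * log n) ^ (u - 1) / (n : ℝ) ^ θ := by
        gcongr
        · linarith
        · exact harmonic_le_three_mul_log hn
    _ = _ := by rw [mul_pow]; ring

theorem r_nu_bound (u : ℕ) (hu : 1 ≤ u) :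
    ∃ c > (0:ℝ), ∀ θ : ℝ, 0 < θ → ∀ n : ℕ, 2 ≤ n →
      (n : ℝ) ^ (1 - θ) *
        ∑ j ∈ (Fintype.piFinset fun _ : Fin u => Finset.Icc 1 n).filter
            (fun j => ∑ i, j i = n), (∏ i, (j i : ℝ))⁻¹
      ≤ c * (Real.log n) ^ (u - 1) / (n : ℝ) ^ θ :=
  r_nu_bound_general u
end

section
/- Let θ > 0. For n ≥ 2, Σ_{j ≤ n/2} 1/(j(n-j)) + Σ_{n/2 < j < n} (1/(j(n-j)))·(1 - j/n)^{θ-1} ≤ C (log n)/n^{min(1,θ)} for a constant C depending only on θ. -/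
open Finset Real

/-! Each sum is compared termwise with a harmonic sum. For `j ≤ n/2`,
`1/(j(n-j)) ≤ (2/n)·(1/j)`. For `j > n/2`, put `k = n - j`: then `1/(j(n-j)) ≤ (2/n)·(1/k)`, and
since `1/n ≤ k/n ≤ 1` the weight `(k/n)^(θ-1)` is at most `n^(1 - min 1 θ)`. Both harmonic sums
are at most `1 + log n ≤ (1 + 1/log 2) log n` for `n ≥ 2`. -/

lemma sum_Icc_inv_le_one_add_log (n : ℕ) : ∑ j ∈ Icc 1 n, (j : ℝ)⁻¹ ≤ 1 + log n := by
  simpa [harmonic_eq_sum_Icc] using harmonic_le_one_add_log n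

lemma sum_inv_sub_le_one_add_log {n : ℕ} {s : Finset ℕ} (hs : s ⊆ range n) :
    ∑ j ∈ s, ((n : ℝ) - j)⁻¹ ≤ 1 + log n := by
  have hreflect : ∑ j ∈ range n, ((n : ℝ) - j)⁻¹ = harmonic n := by
    rw [harmonic, ← sum_range_reflect]
    push_cast
    refine sum_congr rfl fun j hj => ?_
    rw [mem_range] at hj
    rw [Nat.cast_sub (by omega), Nat.cast_sub (by omega)]
    ring_nf
  calc ∑ j ∈ s, ((n : ℝ) - j)⁻¹ ≤ ∑ j ∈ range n, ((n : ℝ) - j)⁻¹ := by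
        refine sum_le_sum_of_subset_of_nonneg hs fun j hj _ => ?_
        have : (j : ℝ) < n := by exact_mod_cast mem_range.mp hj
        exact inv_nonneg.mpr (by linarith)
    _ ≤ 1 + log n := hreflect ▸ harmonic_le_one_add_log n

lemma one_div_mul_sub_le {x y : ℝ} (hx : 0 < x) (hxy : 2 * x ≤ y) :
    1 / (x * (y - x)) ≤ 2 / y * x⁻¹ := by
  rw [div_mul_eq_mul_div, mul_comm, ← div_eq_mul_inv, div_div,
    div_le_div_iff₀ (by nlinarith) (by nlinarith)]
  nlinarith

lemma div_rpow_sub_one_le {k n θ : ℝ} (hk : 1 ≤ k) (hkn : k ≤ n) :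
    (k / n) ^ (θ - 1) ≤ n ^ (1 - min 1 θ) := by
  have hn : 0 < n := by linarith
  calc (k / n) ^ (θ - 1) ≤ (k / n) ^ (min 1 θ - 1) :=
        rpow_le_rpow_of_exponent_ge (by positivity) (div_le_one_of_le₀ hkn hn.le)
          (by linarith [min_le_right 1 θ])
    _ = (n / k) ^ (1 - min 1 θ) := by
        rw [← inv_div, inv_rpow (by positivity), ← rpow_neg (by positivity), neg_sub]
    _ ≤ n ^ (1 - min 1 θ) :=
        rpow_le_rpow (by positivity) (div_le_self hn.le hk) (by linarith [min_le_left 1 θ])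

lemma sum_lower_half_le (n : ℕ) :
    ∑ j ∈ (Icc 1 n).filter (fun j => 2 * j ≤ n), 1 / ((j : ℝ) * ((n : ℝ) - j))
      ≤ 2 / n * (1 + log n) := by
  calc ∑ j ∈ (Icc 1 n).filter (fun j => 2 * j ≤ n), 1 / ((j : ℝ) * ((n : ℝ) - j))
      ≤ ∑ j ∈ (Icc 1 n).filter (fun j => 2 * j ≤ n), 2 / (n : ℝ) * (j : ℝ)⁻¹ := by
        refine sum_le_sum fun j hj => ?_
        simp only [mem_filter, mem_Icc] at hj
        exact one_div_mul_sub_le (by exact_mod_cast hj.1.1) (by exact_mod_cast hj.2)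
    _ ≤ ∑ j ∈ Icc 1 n, 2 / (n : ℝ) * (j : ℝ)⁻¹ :=
        sum_le_sum_of_subset_of_nonneg (filter_subset _ _) fun _ _ _ => by positivity
    _ ≤ 2 / n * (1 + log n) := by
        rw [← mul_sum]
        exact mul_le_mul_of_nonneg_left (sum_Icc_inv_le_one_add_log n) (by positivity)

lemma sum_upper_half_le (θ : ℝ) (n : ℕ) :
    ∑ j ∈ (Icc 1 n).filter (fun j => n < 2 * j ∧ j < n),
        1 / ((j : ℝ) * ((n : ℝ) - j)) * (1 - (j : ℝ) / n) ^ (θ - 1)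
      ≤ 2 / (n : ℝ) ^ (min 1 θ) * (1 + log n) := by
  set s := (Icc 1 n).filter (fun j => n < 2 * j ∧ j < n)
  have hs : s ⊆ range n := fun j hj => by
    simp only [s, mem_filter, mem_Icc] at hj
    exact mem_range.mpr hj.2.2
  calc ∑ j ∈ s, 1 / ((j : ℝ) * ((n : ℝ) - j)) * (1 - (j : ℝ) / n) ^ (θ - 1)
      ≤ ∑ j ∈ s, 2 / (n : ℝ) ^ (min 1 θ) * ((n : ℝ) - j)⁻¹ := by
        refine sum_le_sum fun j hj => ?_
        simp only [s, mem_filter, mem_Icc] at hj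
        obtain ⟨-, hjn, hjlt⟩ := hj
        set k := (n : ℝ) - j with hk
        have hk1 : 1 ≤ k := by rw [hk, le_sub_iff_add_le']; exact_mod_cast hjlt
        have hkn : k ≤ n := by rw [hk]; linarith [(Nat.cast_nonneg j : (0 : ℝ) ≤ j)]
        have h2k : 2 * k ≤ n := by
          have : (n : ℝ) < 2 * j := by exact_mod_cast hjn
          rw [hk]; linarith
        have hn : (0 : ℝ) < n := by linarith
        have hjk : (j : ℝ) = n - k := by ring
        have hcomp : 1 - (j : ℝ) / n = k / n := by field_simp; ring
        calc 1 / ((j : ℝ) * k) * (1 - (j : ℝ) / n) ^ (θ - 1)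
            = 1 / (k * (n - k)) * (k / n) ^ (θ - 1) := by rw [hcomp, hjk]; ring
          _ ≤ 2 / n * k⁻¹ * n ^ (1 - min 1 θ) :=
              mul_le_mul (one_div_mul_sub_le (by linarith) h2k) (div_rpow_sub_one_le hk1 hkn)
                (by positivity) (by positivity)
          _ = 2 / (n : ℝ) ^ (min 1 θ) * k⁻¹ := by
              rw [rpow_sub hn, rpow_one]; field_simp
    _ ≤ 2 / (n : ℝ) ^ (min 1 θ) * (1 + log n) := by
        rw [← mul_sum]
        exact mul_le_mul_of_nonneg_left (sum_inv_sub_le_one_add_log hs) (by positivity)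

lemma one_add_log_le_mul_log {x : ℝ} (hx : 2 ≤ x) : 1 + log x ≤ (1 + (log 2)⁻¹) * log x := by
  have hlog2 : 0 < log 2 := log_pos one_lt_two
  have hlog : log 2 ≤ log x := log_le_log two_pos hx
  have : 1 ≤ (log 2)⁻¹ * log x := by rw [inv_mul_eq_div, le_div_iff₀ hlog2]; linarith
  linarith

theorem two_sums_bound_general (θ : ℝ) :
    ∃ C > (0:ℝ), ∀ n : ℕ, 2 ≤ n →
      (∑ j ∈ (Finset.Icc 1 n).filter (fun j => 2 * j ≤ n),
          1 / ((j : ℝ) * ((n : ℝ) - j))) +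
      (∑ j ∈ (Finset.Icc 1 n).filter (fun j => n < 2 * j ∧ j < n),
          (1 / ((j : ℝ) * ((n : ℝ) - j))) * (1 - (j : ℝ) / n) ^ (θ - 1))
      ≤ C * Real.log n / (n : ℝ) ^ (min 1 θ) := by
  refine ⟨4 * (1 + (log 2)⁻¹), by positivity, fun n hn => ?_⟩
  have hn2 : (2 : ℝ) ≤ n := by exact_mod_cast hn
  have hpow_le : (n : ℝ) ^ (min 1 θ) ≤ n := rpow_le_self_of_one_le (by linarith) (min_le_left 1 θ)
  calc _ ≤ 2 / n * (1 + log n) + 2 / (n : ℝ) ^ (min 1 θ) * (1 + log n) :=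
        add_le_add (sum_lower_half_le n) (sum_upper_half_le θ n)
    _ ≤ (2 / (n : ℝ) ^ (min 1 θ) + 2 / (n : ℝ) ^ (min 1 θ)) * (1 + log n) := by
        rw [add_mul]; gcongr
    _ ≤ (2 / (n : ℝ) ^ (min 1 θ) + 2 / (n : ℝ) ^ (min 1 θ)) * ((1 + (log 2)⁻¹) * log n) := by
        gcongr; exact one_add_log_le_mul_log hn2
    _ = 4 * (1 + (log 2)⁻¹) * log n / (n : ℝ) ^ (min 1 θ) := by ring

theorem two_sums_bound (θ : ℝ) (hθ : 0 < θ) :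
    ∃ C > (0:ℝ), ∀ n : ℕ, 2 ≤ n →
      (∑ j ∈ (Finset.Icc 1 n).filter (fun j => 2 * j ≤ n),
          1 / ((j : ℝ) * ((n : ℝ) - j))) +
      (∑ j ∈ (Finset.Icc 1 n).filter (fun j => n < 2 * j ∧ j < n),
          (1 / ((j : ℝ) * ((n : ℝ) - j))) * (1 - (j : ℝ) / n) ^ (θ - 1))
      ≤ C * Real.log n / (n : ℝ) ^ (min 1 θ) :=
  two_sums_bound_general θ
end
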